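/- arXiv:1111.4842 — 2 statements merged into one kernel-verified Lean document; each statement's English description precedes it below -/
import Mathlib

section
/- For all positive integers n and m, β(nm) = Σ_{d ∣ gcd(n,m)} β(n/d)·β(m/d)·d·μ(d)², where μ is the Möbius function. -/
/-- The Liouville function `λ(n) = (-1)^Ω(n)`. -/
def lam (n : ℕ) : ℤ := (-1) ^ (ArithmeticFunction.cardFactors n)

/-- The alternating sum-of-divisors function `β(n) = ∑_{d ∣ n} d · λ(n/d)`. -/
def beta (n : ℕ) : ℤ := ∑ d ∈ n.divisors, (d : ℤ) * lam (n / d)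

/-!
Call `F : ℕ → ℕ → R` bimultiplicative if `F (n n') (m m') = F n m · F n' m'` whenever `n m` and
`n' m'` are coprime; two such functions agree on positive arguments as soon as they agree on
pairs of powers of a common prime. Both sides of the identity are bimultiplicative: the left
because `β = id ∗ λ` is multiplicative, the right because the divisors of
`gcd (n n') (m m') = gcd n m · gcd n' m'` split accordingly. At `(p^a, p^b)` only `d = 1` and
`d = p` contribute, and the claim becomes `β(p^{a+b+2}) = β(p^{a+1}) β(p^{b+1}) + p β(p^a) β(p^b)`,
which follows from the closed form `(p + 1) β(p^k) = p^{k+1} - (-1)^{k+1}`.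
-/

open ArithmeticFunction Finset

theorem Nat.Coprime.sum_divisors_mul_eq_sum_sum {M : Type*} [AddCommMonoid M] {m n : ℕ}
    (h : m.Coprime n) (f : ℕ → M) :
    ∑ d ∈ (m * n).divisors, f d = ∑ a ∈ m.divisors, ∑ b ∈ n.divisors, f (a * b) := by
  rw [h.divisors_mul, sum_map, ← sum_product']
  exact sum_attach _ fun p : ℕ × ℕ => f (p.1 * p.2)

theorem Nat.gcd_mul_mul_of_coprime {n m n' m' : ℕ} (h : (n * m).Coprime (n' * m')) :
    (n * n').gcd (m * m') = n.gcd m * n'.gcd m' := by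
  have hnn' : n.Coprime n' := h.coprime_mul_right.coprime_mul_right_right
  have hmm' : m.Coprime m' := h.coprime_mul_left.coprime_mul_left_right
  have hmn' : m.Coprime n' := h.coprime_mul_left.coprime_mul_right_right
  have hm'n : m'.Coprime n := h.symm.coprime_mul_left.coprime_mul_right_right
  rw [hmm'.gcd_mul, Nat.gcd_comm, hnn'.gcd_mul, Nat.gcd_comm _ m', hnn'.gcd_mul,
    hmn'.gcd_eq_one, hm'n.gcd_eq_one, Nat.gcd_comm m, Nat.gcd_comm m']
  ring

theorem Nat.gcd_pow_pow (p a b : ℕ) : (p ^ a).gcd (p ^ b) = p ^ min a b := by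
  rcases le_total a b with h | h
  · rw [min_eq_left h, Nat.gcd_eq_left (pow_dvd_pow p h)]
  · rw [min_eq_right h, Nat.gcd_eq_right (pow_dvd_pow p h)]

def IsBimultiplicative {R : Type*} [Mul R] (F : ℕ → ℕ → R) : Prop :=
  ∀ ⦃n m n' m' : ℕ⦄, (n * m).Coprime (n' * m') → F (n * n') (m * m') = F n m * F n' m'

namespace IsBimultiplicative

theorem eq_of_eq_prime_pow {R : Type*} [Mul R] {F G : ℕ → ℕ → R} (hF : IsBimultiplicative F)
    (hG : IsBimultiplicative G) (hpow : ∀ p a b, p.Prime → F (p ^ a) (p ^ b) = G (p ^ a) (p ^ b))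
    {n m : ℕ} (hn : n ≠ 0) (hm : m ≠ 0) : F n m = G n m := by
  induction hk : n * m using Nat.strong_induction_on generalizing n m with
  | _ k ih =>
  by_cases h1 : n * m = 1
  · obtain ⟨rfl, rfl⟩ := mul_eq_one.mp h1
    simpa using hpow 2 0 0 Nat.prime_two
  obtain ⟨p, hp, hpnm⟩ := Nat.exists_prime_and_dvd h1
  obtain ⟨a, n', hpn', rfl⟩ := Nat.exists_eq_pow_mul_and_not_dvd hn p hp.ne_one
  obtain ⟨b, m', hpm', rfl⟩ := Nat.exists_eq_pow_mul_and_not_dvd hm p hp.ne_one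
  have hab : a + b ≠ 0 := by
    intro h
    obtain ⟨rfl, rfl⟩ : a = 0 ∧ b = 0 := by omega
    simp only [pow_zero, one_mul] at hpnm
    exact (hp.dvd_mul.mp hpnm).elim hpn' hpm'
  have hn' : n' ≠ 0 := right_ne_zero_of_mul hn
  have hm' : m' ≠ 0 := right_ne_zero_of_mul hm
  have hcop : (p ^ a * p ^ b).Coprime (n' * m') := by
    rw [← pow_add]
    exact .pow_left _ (.mul_right (hp.coprime_iff_not_dvd.2 hpn') (hp.coprime_iff_not_dvd.2 hpm'))
  have hlt : n' * m' < k := calc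
    n' * m' < p ^ (a + b) * (n' * m') :=
      lt_mul_left (Nat.pos_of_ne_zero (mul_ne_zero hn' hm')) (Nat.one_lt_pow hab hp.one_lt)
    _ = k := by rw [← hk, pow_add]; ring
  rw [hF hcop, hG hcop, hpow p a b hp, ih _ hlt hn' hm' rfl]

variable {R : Type*} [CommSemiring R]

theorem sum_gcd_divisors {K : ℕ → R} (hK : ∀ ⦃a b : ℕ⦄, a.Coprime b → K (a * b) = K a * K b)
    {H : ℕ → ℕ → R} (hH : IsBimultiplicative H) :
    IsBimultiplicative fun n m => ∑ d ∈ (n.gcd m).divisors, H (n / d) (m / d) * K d := by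
  intro n m n' m' hcop
  have hcop_gcd : (n.gcd m).Coprime (n'.gcd m') :=
    (hcop.coprime_dvd_left (dvd_mul_of_dvd_left (Nat.gcd_dvd_left n m) m)).coprime_dvd_right
      (dvd_mul_of_dvd_left (Nat.gcd_dvd_left n' m') m')
  dsimp only
  rw [Nat.gcd_mul_mul_of_coprime hcop, hcop_gcd.sum_divisors_mul_eq_sum_sum, sum_mul_sum]
  refine sum_congr rfl fun d hd => sum_congr rfl fun d' hd' => ?_
  have hdd' : d.Coprime d' :=
    (hcop_gcd.coprime_dvd_left (Nat.dvd_of_mem_divisors hd)).coprime_dvd_right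
      (Nat.dvd_of_mem_divisors hd')
  replace hd := Nat.dvd_gcd_iff.mp (Nat.dvd_of_mem_divisors hd)
  replace hd' := Nat.dvd_gcd_iff.mp (Nat.dvd_of_mem_divisors hd')
  have hcop_div : (n / d * (m / d)).Coprime (n' / d' * (m' / d')) :=
    (hcop.coprime_dvd_left (mul_dvd_mul (Nat.div_dvd_of_dvd hd.1) (Nat.div_dvd_of_dvd hd.2)))
      |>.coprime_dvd_right (mul_dvd_mul (Nat.div_dvd_of_dvd hd'.1) (Nat.div_dvd_of_dvd hd'.2))
  rw [Nat.mul_div_mul_comm hd.1 hd'.1, Nat.mul_div_mul_comm hd.2 hd'.2, hH hcop_div, hK hdd']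
  ring

end IsBimultiplicative

namespace ArithmeticFunction.IsMultiplicative

variable {R : Type*} [CommSemiring R] {f g : ArithmeticFunction R}

theorem isBimultiplicative_apply_mul (hf : f.IsMultiplicative) :
    IsBimultiplicative fun n m => f (n * m) := fun n m n' m' h => by
  dsimp only
  rw [mul_mul_mul_comm, hf.map_mul_of_coprime h]

theorem isBimultiplicative_apply_mul_apply (hf : f.IsMultiplicative) (hg : g.IsMultiplicative) :
    IsBimultiplicative fun n m => f n * g m := fun n m n' m' h => by
  dsimp only
  rw [hf.map_mul_of_coprime h.coprime_mul_right.coprime_mul_right_right,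
    hg.map_mul_of_coprime h.coprime_mul_left.coprime_mul_left_right]
  ring

end ArithmeticFunction.IsMultiplicative

theorem beta_eq_id_mul_liouville :
    beta = ⇑(((ArithmeticFunction.id : ArithmeticFunction ℕ) : ArithmeticFunction ℤ) * liouville) := by
  funext n
  simp only [mul_apply, natCoe_apply, id_apply]
  rw [Nat.sum_divisorsAntidiagonal fun d e => (d : ℤ) * liouville e, beta]
  refine sum_congr rfl fun d hd => ?_
  have : n / d ≠ 0 := (Nat.div_pos (Nat.divisor_le hd) (Nat.pos_of_mem_divisors hd)).ne'
  simp [liouville_apply this, lam]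

theorem beta_one : beta 1 = 1 := by simp [beta, lam]

theorem beta_prime_pow {p : ℕ} (hp : p.Prime) (k : ℕ) :
    beta (p ^ k) = ∑ i ∈ range (k + 1), (p : ℤ) ^ i * (-1) ^ (k - i) := by
  rw [beta, Nat.sum_divisors_prime_pow hp]
  refine sum_congr rfl fun i hi => ?_
  rw [Nat.pow_div (Nat.lt_succ_iff.mp (mem_range.mp hi)) hp.pos, lam,
    cardFactors_apply_prime_pow hp]
  push_cast
  rfl

theorem beta_prime_pow_mul_succ {p : ℕ} (hp : p.Prime) (k : ℕ) :
    beta (p ^ k) * (p + 1) = (p : ℤ) ^ (k + 1) - (-1) ^ (k + 1) := by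
  rw [beta_prime_pow hp, ← geom_sum₂_mul, sub_neg_eq_add, Nat.add_sub_cancel]

theorem beta_prime_pow_add_two {p : ℕ} (hp : p.Prime) (a b : ℕ) :
    beta (p ^ (a + b + 2)) =
      beta (p ^ (a + 1)) * beta (p ^ (b + 1)) + p * (beta (p ^ a) * beta (p ^ b)) := by
  have hβ := beta_prime_pow_mul_succ hp
  refine mul_right_cancel₀ (pow_ne_zero 2 (by positivity : (p : ℤ) + 1 ≠ 0)) ?_
  calc beta (p ^ (a + b + 2)) * (p + 1) ^ 2
      = (beta (p ^ (a + b + 2)) * (p + 1)) * (p + 1) := by ring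
    _ = ((p : ℤ) ^ (a + 2) - (-1) ^ (a + 2)) * ((p : ℤ) ^ (b + 2) - (-1) ^ (b + 2))
        + p * (((p : ℤ) ^ (a + 1) - (-1) ^ (a + 1)) * ((p : ℤ) ^ (b + 1) - (-1) ^ (b + 1))) := by
      rw [hβ]; ring
    _ = _ := by rw [← hβ, ← hβ, ← hβ, ← hβ]; ring

theorem beta_prime_pow_mul_prime_pow {p : ℕ} (hp : p.Prime) (a b : ℕ) :
    beta (p ^ a * p ^ b) = ∑ d ∈ ((p ^ a).gcd (p ^ b)).divisors,
      beta (p ^ a / d) * beta (p ^ b / d) * ((d : ℤ) * moebius d ^ 2) := by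
  rcases a with _ | a
  · simp [beta_one]
  rcases b with _ | b
  · simp [beta_one]
  have hsq (i : ℕ) : moebius (p ^ (i + 2)) = 0 := by simp [moebius_apply_prime_pow hp]
  have hdiv (k : ℕ) : p ^ (k + 1) / p = p ^ k := by rw [pow_succ, Nat.mul_div_cancel _ hp.pos]
  rw [Nat.gcd_pow_pow, Nat.sum_divisors_prime_pow hp, min_add_add_right, sum_range_succ',
    sum_range_succ', sum_eq_zero fun i _ => by simp [hsq], ← pow_add, add_add_add_comm,
    beta_prime_pow_add_two hp]
  simp only [zero_add, pow_one, pow_zero, Nat.div_one, hdiv, moebius_apply_prime hp,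
    moebius_apply_one]
  push_cast
  ring

theorem stmt_10 (n m : ℕ) (hn : 0 < n) (hm : 0 < m) :
    beta (n * m) =
      ∑ d ∈ (Nat.gcd n m).divisors,
        beta (n / d) * beta (m / d) * (d : ℤ) * (ArithmeticFunction.moebius d : ℤ) ^ 2 := by
  have hβ : (((ArithmeticFunction.id : ArithmeticFunction ℕ) : ArithmeticFunction ℤ) *
      liouville).IsMultiplicative := isMultiplicative_id.natCast.mul isMultiplicative_liouville
  have hK ⦃a b : ℕ⦄ (h : a.Coprime b) :
      ((a * b : ℕ) : ℤ) * moebius (a * b) ^ 2 = (a * moebius a ^ 2) * (b * moebius b ^ 2) := by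
    rw [isMultiplicative_moebius.map_mul_of_coprime h]
    push_cast
    ring
  have hLHS : IsBimultiplicative fun n m => beta (n * m) := by
    rw [beta_eq_id_mul_liouville]
    exact hβ.isBimultiplicative_apply_mul
  have hH : IsBimultiplicative fun n m => beta n * beta m := by
    rw [beta_eq_id_mul_liouville]
    exact hβ.isBimultiplicative_apply_mul_apply hβ
  have hRHS := hH.sum_gcd_divisors (K := fun d => (d : ℤ) * moebius d ^ 2) hK
  simp only [mul_assoc (beta _ * beta _)]
  exact hLHS.eq_of_eq_prime_pow hRHS (fun p a b hp => beta_prime_pow_mul_prime_pow hp a b)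
    hn.ne' hm.ne'
end

section
/- For every positive integer n, β(n)/n = (π²/15)·Σ_{r=1}^{∞} (λ(r)/r²)·c_r(n), where the series converges absolutely and c_r(n) = Σ_{d ∣ gcd(r,n)} d·μ(r/d) is the Ramanujan sum. -/
/-- The Ramanujan sum `c_r(n) = ∑_{d ∣ gcd(r,n)} d · μ(r/d)`. -/
def ramanujanSum (r n : ℕ) : ℤ :=
  ∑ d ∈ (Nat.gcd r n).divisors, (d : ℤ) * (ArithmeticFunction.moebius (r / d) : ℤ)


/-! Writing `c_r(n) = ∑_{d ∣ n, d ∣ r} d μ(r/d)` and substituting `r = d m`, complete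
multiplicativity of `λ` turns the series into `∑_{d ∣ n} λ(d)/d · K` with
`K = ∑_m μ(m) λ(m) / m²`, and `∑_{d ∣ n} λ(d)/d = β(n)/n`. The Dirichlet convolution identities
`ζ * λ = 1_{squares}` and `(μ λ) * λ = ε` give `ζ(2) L = ζ(4)` and `L K = 1` for
`L = ∑_m λ(m) / m²`, hence `K = ζ(2) / ζ(4) = 15 / π²`. -/

open ArithmeticFunction
open scoped ArithmeticFunction.zeta ArithmeticFunction.Moebius
open Real

theorem Nat.isSquare_mul_iff_of_coprime {a b : ℕ} (h : a.Coprime b) :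
    IsSquare (a * b) ↔ IsSquare a ∧ IsSquare b := by
  refine ⟨fun ⟨c, hc⟩ => ?_, fun ⟨ha, hb⟩ => ha.mul hb⟩
  have hab : a * b = c ^ 2 := by rw [hc, sq]
  obtain ⟨d, rfl⟩ := exists_eq_pow_of_mul_eq_pow (Nat.isUnit_iff.mpr h) hab
  obtain ⟨e, rfl⟩ :=
    exists_eq_pow_of_mul_eq_pow (Nat.isUnit_iff.mpr h.symm) ((mul_comm _ _).trans hab)
  exact ⟨⟨d, sq d⟩, ⟨e, sq e⟩⟩

theorem Nat.Prime.isSquare_pow_iff {p k : ℕ} (hp : p.Prime) : IsSquare (p ^ k) ↔ Even k := by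
  refine ⟨fun ⟨a, ha⟩ => ?_, fun hk => hk.isSquare_pow p⟩
  obtain ⟨j, -, rfl⟩ := (Nat.dvd_prime_pow hp).mp (Dvd.intro_left a ha.symm)
  exact ⟨j, Nat.pow_right_injective hp.two_le (by simp only [ha, pow_add])⟩

namespace ArithmeticFunction

theorem abs_liouville_le_one (n : ℕ) : |liouville n| ≤ 1 := by
  rcases eq_or_ne n 0 with rfl | hn
  · simp
  · simp [liouville_apply hn]

-- `0` is a square, but an arithmetic function must vanish at `0`.
def squareIndicator : ArithmeticFunction ℤ :=
  ⟨fun n => if n ≠ 0 ∧ IsSquare n then 1 else 0, by simp⟩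

theorem squareIndicator_apply {n : ℕ} (hn : n ≠ 0) :
    squareIndicator n = if IsSquare n then 1 else 0 := by
  simp [squareIndicator, hn]

theorem isMultiplicative_squareIndicator : squareIndicator.IsMultiplicative := by
  refine ⟨by simp [squareIndicator], fun {m n} hmn => ?_⟩
  rcases eq_or_ne m 0 with rfl | hm
  · simp
  rcases eq_or_ne n 0 with rfl | hn
  · simp
  simp only [squareIndicator_apply (mul_ne_zero hm hn), squareIndicator_apply hm,
    squareIndicator_apply hn, Nat.isSquare_mul_iff_of_coprime hmn, ite_and]
  split_ifs <;> simp

theorem coe_zeta_mul_liouville : (ζ * liouville : ArithmeticFunction ℤ) = squareIndicator := by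
  refine (IsMultiplicative.eq_iff_eq_on_prime_powers _
    (isMultiplicative_zeta.natCast.mul isMultiplicative_liouville) _
    isMultiplicative_squareIndicator).mpr fun p k hp => ?_
  rw [coe_zeta_mul_apply, Nat.sum_divisors_prime_pow hp,
    squareIndicator_apply (pow_ne_zero k hp.ne_zero)]
  simp_rw [hp.isSquare_pow_iff, liouville_apply (pow_ne_zero _ hp.ne_zero),
    cardFactors_apply_prime_pow hp]
  rw [neg_one_geom_sum]
  rcases Nat.even_or_odd k with hk | hk
  · simp [hk, Nat.even_add_one]
  · simp [Nat.not_even_iff_odd.mpr hk, hk]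

theorem pmul_moebius_liouville_mul_liouville :
    ((μ : ArithmeticFunction ℤ).pmul liouville) * liouville = 1 := by
  ext n
  have hsum : ∑ x ∈ n.divisorsAntidiagonal, μ x.1 = (1 : ArithmeticFunction ℤ) n := by
    rw [← moebius_mul_coe_zeta, coe_mul_zeta_apply,
      Nat.sum_divisorsAntidiagonal (fun a (_ : ℕ) => μ a)]
  calc ((μ : ArithmeticFunction ℤ).pmul liouville * liouville) n
      = ∑ x ∈ n.divisorsAntidiagonal, μ x.1 * liouville n := by
        refine mul_apply.trans (Finset.sum_congr rfl fun x hx => ?_)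
        rw [pmul_apply, mul_assoc, ← liouville_apply_mul, (Nat.mem_divisorsAntidiagonal.mp hx).1]
    _ = (1 : ArithmeticFunction ℤ) n := by
        rw [← Finset.sum_mul, hsum, one_apply]
        split_ifs with h <;> simp [h, liouville_apply_one]

theorem hasSum_mul {R : Type*} [NormedRing R] [CompleteSpace R] {f g : ArithmeticFunction R}
    {a b : R} (hf : HasSum f a) (hg : HasSum g b) (hf' : Summable (‖f ·‖))
    (hg' : Summable (‖g ·‖)) : HasSum (f * g) (a * b) := by
  suffices h : ⇑(f * g) = fun n => ∑' x : (fun x : ℕ × ℕ => x.1 * x.2) ⁻¹' {n},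
      f x.1.1 * g x.1.2 by
    rw [h]
    exact (hf.mul hg (summable_mul_of_summable_norm hf' hg')).tsum_fiberwise _
  funext n
  rcases eq_or_ne n 0 with rfl | hn
  · -- The fibre over `0` is infinite, but all its terms vanish since `f 0 = g 0 = 0`.
    refine ArithmeticFunction.map_zero.trans
      (Eq.symm <| (tsum_congr fun ⟨x, hx⟩ => ?_).trans tsum_zero)
    rcases mul_eq_zero.mp hx with h | h <;> simp [h]
  · have hfiber : (fun x : ℕ × ℕ => x.1 * x.2) ⁻¹' {n} = ↑n.divisorsAntidiagonal := by
      ext x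
      simp [Nat.mem_divisorsAntidiagonal, hn]
    rw [mul_apply, hfiber, Finset.tsum_subtype' n.divisorsAntidiagonal fun x => f x.1 * g x.2]

theorem pdiv_mul_of_map_mul {R : Type*} [Semifield R] (f g : ArithmeticFunction R)
    {w : ArithmeticFunction R} (hw : ∀ a b, w (a * b) = w a * w b) :
    (f * g).pdiv w = f.pdiv w * g.pdiv w := by
  ext n
  simp only [pdiv_apply, mul_apply, Finset.sum_div]
  refine Finset.sum_congr rfl fun x hx => ?_
  rw [← (Nat.mem_divisorsAntidiagonal.mp hx).1, hw, div_mul_div_comm]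

theorem pdiv_pow_apply {R : Type*} [DivisionSemiring R] (f : ArithmeticFunction R) {k : ℕ}
    (hk : k ≠ 0) (n : ℕ) : f.pdiv ↑(pow k) n = f n / (n : R) ^ k := by
  simp [pdiv_apply, pow_apply, hk]

theorem pow_apply_mul (k a b : ℕ) : pow k (a * b) = pow k a * pow k b := by
  simp only [pow_apply, mul_pow]
  split_ifs <;> simp_all

theorem pdiv_pow_mul {R : Type*} [Semifield R] (f g : ArithmeticFunction R) (k : ℕ) :
    (f * g).pdiv ↑(pow k) = f.pdiv ↑(pow k) * g.pdiv ↑(pow k) :=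
  pdiv_mul_of_map_mul f g fun a b => by simp only [natCoe_apply, pow_apply_mul, Nat.cast_mul]

theorem summable_norm_intCoe_pdiv_pow_two {f : ArithmeticFunction ℤ} (hf : ∀ n, |f n| ≤ 1) :
    Summable (‖(f : ArithmeticFunction ℝ).pdiv ↑(pow 2) ·‖) := by
  refine Summable.of_nonneg_of_le (fun _ => norm_nonneg _) (fun n => ?_) hasSum_zeta_two.summable
  rw [pdiv_pow_apply _ two_ne_zero, intCoe_apply, norm_div, norm_pow, Real.norm_natCast,
    Real.norm_eq_abs, ← Int.cast_abs]
  gcongr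
  exact_mod_cast hf n

theorem hasSum_zeta_pdiv_pow_two :
    HasSum ((ζ : ArithmeticFunction ℝ).pdiv ↑(pow 2)) (π ^ 2 / 6) := by
  convert hasSum_zeta_two using 1
  funext n
  rcases eq_or_ne n 0 with rfl | hn
  · simp
  · simp [pdiv_pow_apply _ two_ne_zero, hn]

theorem hasSum_squareIndicator_pdiv_pow_two :
    HasSum ((squareIndicator : ArithmeticFunction ℝ).pdiv ↑(pow 2)) (π ^ 4 / 90) := by
  have hinj : Function.Injective fun j : ℕ => j ^ 2 := Nat.pow_left_injective two_ne_zero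
  refine (hinj.hasSum_iff fun n hn => ?_).mp ?_
  · rcases eq_or_ne n 0 with rfl | hn0
    · simp
    have hsq : ¬IsSquare n := fun ⟨j, hj⟩ => hn ⟨j, by rw [hj]; exact sq j⟩
    simp [pdiv_pow_apply _ two_ne_zero, squareIndicator_apply hn0, hsq]
  · convert hasSum_zeta_four using 1
    funext j
    rcases eq_or_ne j 0 with rfl | hj
    · simp
    · have hsq : IsSquare (j ^ 2) := ⟨j, sq j⟩
      simp [pdiv_pow_apply _ two_ne_zero, squareIndicator_apply (pow_ne_zero 2 hj), hsq,
        ← pow_mul]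

theorem hasSum_liouville_pdiv_pow_two :
    HasSum ((liouville : ArithmeticFunction ℝ).pdiv ↑(pow 2)) (π ^ 2 / 15) := by
  have hL := summable_norm_intCoe_pdiv_pow_two abs_liouville_le_one
  have hprod := hasSum_mul hasSum_zeta_pdiv_pow_two hL.of_norm.hasSum
    hasSum_zeta_pdiv_pow_two.summable.abs hL
  rw [← pdiv_pow_mul, ← coe_coe, ← intCoe_mul, coe_zeta_mul_liouville] at hprod
  set L := ∑' n, (liouville : ArithmeticFunction ℝ).pdiv ↑(pow 2) n
  have h : π ^ 2 / 6 * L = π ^ 4 / 90 := hprod.unique hasSum_squareIndicator_pdiv_pow_two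
  have hL_eq : L = π ^ 2 / 15 :=
    mul_right_cancel₀ (pow_ne_zero 2 pi_ne_zero) (by linear_combination 6 * h)
  exact hL_eq ▸ hL.of_norm.hasSum

theorem hasSum_pmul_moebius_liouville_pdiv_pow_two :
    HasSum ((((μ : ArithmeticFunction ℤ).pmul liouville : ArithmeticFunction ℤ) :
      ArithmeticFunction ℝ).pdiv ↑(pow 2)) (15 / π ^ 2) := by
  have hK := summable_norm_intCoe_pdiv_pow_two fun n => by
    rw [pmul_apply, abs_mul]
    exact mul_le_one₀ abs_moebius_le_one (abs_nonneg _) (abs_liouville_le_one n)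
  have hprod := hasSum_mul hK.of_norm.hasSum hasSum_liouville_pdiv_pow_two hK
    hasSum_liouville_pdiv_pow_two.summable.abs
  rw [← pdiv_pow_mul, ← intCoe_mul, pmul_moebius_liouville_mul_liouville, intCoe_one] at hprod
  have hone :
      ⇑((1 : ArithmeticFunction ℝ).pdiv ↑(pow 2)) = fun n => if n = 1 then 1 else 0 := by
    funext n
    split_ifs with hn <;> simp [pdiv_apply, hn]
  rw [hone] at hprod
  set K := ∑' n, (((μ : ArithmeticFunction ℤ).pmul liouville : ArithmeticFunction ℤ) :
      ArithmeticFunction ℝ).pdiv ↑(pow 2) n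
  have h : K * (π ^ 2 / 15) = 1 := hprod.unique (hasSum_ite_eq 1 1)
  have hK_eq : K = 15 / π ^ 2 := by
    rw [eq_div_iff (pow_ne_zero 2 pi_ne_zero)]
    linear_combination 15 * h
  exact hK_eq ▸ hK.of_norm.hasSum

end ArithmeticFunction

theorem lam_eq_liouville {n : ℕ} (hn : n ≠ 0) : lam n = liouville n := (liouville_apply hn).symm

theorem beta_div_eq_sum_divisors {n : ℕ} (hn : n ≠ 0) :
    (beta n : ℝ) / n = ∑ d ∈ n.divisors, (liouville d : ℝ) / d := by
  rw [beta, ← Nat.sum_div_divisors n fun d => (d : ℤ) * lam (n / d), Int.cast_sum,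
    Finset.sum_div]
  refine Finset.sum_congr rfl fun d hd => ?_
  obtain ⟨hdvd, -⟩ := Nat.mem_divisors.mp hd
  have hd0 : d ≠ 0 := ne_zero_of_dvd_ne_zero hn hdvd
  rw [Nat.div_div_self hdvd hn, lam_eq_liouville hd0, Int.cast_mul, Int.cast_natCast,
    Nat.cast_div hdvd (Nat.cast_ne_zero.mpr hd0)]
  field_simp

theorem ramanujanSum_eq_sum_filter (r : ℕ) {n : ℕ} (hn : n ≠ 0) :
    ramanujanSum r n = ∑ d ∈ n.divisors with d ∣ r, (d : ℤ) * μ (r / d) := by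
  rw [ramanujanSum]
  congr 1
  ext d
  simp [Nat.dvd_gcd_iff, hn, and_comm]

theorem hasSum_ite_dvd_liouville_div_sq_mul_moebius {d : ℕ} (hd : d ≠ 0) :
    HasSum (fun r => if d ∣ r then (liouville r : ℝ) / r ^ 2 * (d * μ (r / d)) else 0)
      ((liouville d : ℝ) / d * (15 / π ^ 2)) := by
  refine ((mul_right_injective₀ hd).hasSum_iff fun r hr => if_neg ?_).mp ?_
  · rintro ⟨m, rfl⟩
    exact hr ⟨m, rfl⟩
  refine (hasSum_pmul_moebius_liouville_pdiv_pow_two.mul_left _).congr_fun fun m => ?_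
  rcases eq_or_ne m 0 with rfl | hm
  · simp
  simp only [Function.comp_apply, dvd_mul_right, if_true, Nat.mul_div_cancel_left m hd.bot_lt,
    liouville_apply_mul, pdiv_pow_apply _ two_ne_zero, intCoe_apply, pmul_apply]
  push_cast
  field_simp

theorem hasSum_liouville_div_sq_mul_ramanujanSum {n : ℕ} (hn : n ≠ 0) :
    HasSum (fun r => (liouville r : ℝ) / r ^ 2 * ramanujanSum r n)
      ((beta n : ℝ) / n * (15 / π ^ 2)) := by
  have hsplit : ∀ r, (liouville r : ℝ) / r ^ 2 * ramanujanSum r n = ∑ d ∈ n.divisors,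
      if d ∣ r then (liouville r : ℝ) / r ^ 2 * (d * μ (r / d)) else 0 := by
    intro r
    rw [ramanujanSum_eq_sum_filter r hn, Finset.sum_filter, Int.cast_sum, Finset.mul_sum]
    refine Finset.sum_congr rfl fun d _ => ?_
    split_ifs <;> simp
  rw [funext hsplit, beta_div_eq_sum_divisors hn, Finset.sum_mul]
  exact hasSum_sum fun d hd => hasSum_ite_dvd_liouville_div_sq_mul_moebius
    (Nat.pos_of_mem_divisors hd).ne'

theorem stmt_16 (n : ℕ) (hn : 0 < n) :
    Summable (fun r : ℕ =>
      |(lam (r + 1) : ℝ) / ((r : ℝ) + 1) ^ 2 * (ramanujanSum (r + 1) n : ℝ)|) ∧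
    (beta n : ℝ) / (n : ℝ) =
      (Real.pi ^ 2 / 15) *
        ∑' r : ℕ, (lam (r + 1) : ℝ) / ((r : ℝ) + 1) ^ 2 * (ramanujanSum (r + 1) n : ℝ) := by
  have hc := (hasSum_nat_add_iff' 1).mpr (hasSum_liouville_div_sq_mul_ramanujanSum hn.ne')
  simp only [Finset.sum_range_one, ArithmeticFunction.map_zero, Int.cast_zero, zero_div, zero_mul,
    sub_zero, Nat.cast_succ, ← lam_eq_liouville (Nat.succ_ne_zero _)] at hc
  refine ⟨hc.summable.abs, ?_⟩
  rw [hc.tsum_eq]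
  field_simp
end
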